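/- For the one-point compactification X* = X ∪ {α} of an uncountable discrete space X, the ideal O_α = {f ∈ C(X*) : α ∈ int Z(f)} is not a countable strongly annihilated ideal of C(X*). -/

import Mathlib

open ContinuousMap

/-- An ideal `I` is countable strongly annihilated if for each countable subset `S ⊆ I`
and each `b ∉ I` there exists `c` with `c * a = 0` for all `a ∈ S` but `c * b ≠ 0`. -/
def CountableStronglyAnnihilated {R : Type*} [CommRing R] (I : Ideal R) : Prop :=
  ∀ S : Set R, S.Countable → S ⊆ I → ∀ b ∉ I, ∃ c : R, (∀ a ∈ S, c * a = 0) ∧ c * b ≠ 0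

/-- The ideal `O_α = {f ∈ C(X*) : α ∈ int Z(f)}` of `C(X*)`, where `X*` is the
one-point compactification of `X` and `α` is the point at infinity. -/
def Oalpha (X : Type*) [TopologicalSpace X] : Ideal C(OnePoint X, ℝ) where
  carrier := {f | (OnePoint.infty : OnePoint X) ∈ interior {x | f x = 0}}
  zero_mem' := by
    simp only [Set.mem_setOf_eq, ContinuousMap.zero_apply]
    simp
  add_mem' := by
    intro f g hf hg
    have hsub : {x : OnePoint X | f x = 0} ∩ {x | g x = 0} ⊆ {x | (f + g) x = 0} := by
      rintro x ⟨h1, h2⟩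
      simp only [Set.mem_setOf_eq, ContinuousMap.add_apply] at *
      rw [h1, h2, add_zero]
    have h := interior_mono hsub
    rw [interior_inter] at h
    exact h ⟨hf, hg⟩
  smul_mem' := by
    intro c f hf
    have hsub : {x : OnePoint X | f x = 0} ⊆ {x | (c • f) x = 0} := by
      intro x hx
      simp only [Set.mem_setOf_eq] at *
      simp [hx]
    exact interior_mono hsub hf

/-!
The ideal `O_α` consists of the functions vanishing off a finite subset of `X` (and at `α`).
Take an injective sequence `xₙ` in `X`, the point indicators `δₙ = 1_{xₙ} ∈ O_α`, and the continuous
function `b` equal to `1/(n+1)` at `xₙ` and to `0` elsewhere; `b ∉ O_α` since it has infinite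
support. Any `c` with `c δₙ = 0` for all `n` vanishes on every `xₙ`, hence on the support of `b`,
so `c b = 0`.
-/

open Filter Topology Function OnePoint

section

variable {X : Type*} [TopologicalSpace X]

lemma mem_Oalpha_iff {f : C(OnePoint X, ℝ)} : f ∈ Oalpha X ↔ ∀ᶠ z in 𝓝 (∞ : OnePoint X), f z = 0 :=
  mem_interior_iff_mem_nhds

variable [DiscreteTopology X]

lemma finite_setOf_ne_zero_of_mem_Oalpha {f : C(OnePoint X, ℝ)} (hf : f ∈ Oalpha X) :
    {x : X | f x ≠ 0}.Finite := by
  have h := (mem_Oalpha_iff.1 hf).comap ((↑) : X → OnePoint X)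
  rw [comap_coe_nhds_infty, coclosedCompact_eq_cocompact, cocompact_eq_cofinite] at h
  exact eventually_cofinite.1 h

noncomputable def pointIndicator (a : X) : C(OnePoint X, ℝ) :=
  continuousMapMkDiscrete (Set.indicator {a} 1) 0 <| tendsto_const_nhds.congr' <| by
    filter_upwards [(Set.finite_singleton a).eventually_cofinite_notMem] with y hy
    exact (Set.indicator_of_notMem hy _).symm

lemma pointIndicator_mem_Oalpha (a : X) : pointIndicator a ∈ Oalpha X := by
  refine mem_Oalpha_iff.2 ?_
  filter_upwards [isOpen_compl_singleton.mem_nhds (infty_ne_coe a)] with z hz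
  induction z using OnePoint.rec with
  | infty => rfl
  | coe y => exact Set.indicator_of_notMem (fun h => hz (congrArg _ h)) (1 : X → ℝ)

lemma apply_eq_zero_of_mul_pointIndicator_eq_zero {c : C(OnePoint X, ℝ)} {a : X}
    (h : c * pointIndicator a = 0) : c a = 0 := by
  simpa [pointIndicator, continuousMapMkDiscrete, continuousMapMk] using
    DFunLike.congr_fun h (a : OnePoint X)

end

lemma Function.Injective.tendsto_extend_zero_cofinite {α β γ : Type*} [Zero γ]
    [TopologicalSpace γ] {f : α → β} (hf : Injective f) {u : α → γ}
    (hu : Tendsto u cofinite (𝓝 0)) : Tendsto (extend f u 0) cofinite (𝓝 0) := by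
  intro U hU
  refine ((hu hU).image f).subset fun y hy => ?_
  by_cases hy' : ∃ a, f a = y
  · obtain ⟨a, rfl⟩ := hy'
    exact ⟨a, by simpa [hf.extend_apply] using hy, rfl⟩
  · exact absurd (by simpa [extend_apply' _ _ _ hy'] using mem_of_mem_nhds hU) hy

lemma ContinuousMap.mul_eq_zero_of_forall {Y R : Type*} [TopologicalSpace Y] [TopologicalSpace R]
    [MulZeroClass R] [ContinuousMul R] {f g : C(Y, R)} (h : ∀ y, f y = 0 ∨ g y = 0) : f * g = 0 :=
  ContinuousMap.ext fun y => (h y).elim (mul_eq_zero_of_left · _) (mul_eq_zero_of_right _)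

theorem stmt16 {X : Type*} [TopologicalSpace X] [DiscreteTopology X] [Uncountable X] :
    ¬ CountableStronglyAnnihilated (Oalpha X) := by
  intro hX
  obtain ⟨x, hx⟩ := Infinite.natEmbedding X
  set u : ℕ → ℝ := fun n => 1 / ((n : ℝ) + 1)
  have hu : Tendsto u cofinite (𝓝 0) := by
    rw [Nat.cofinite_eq_atTop]; exact tendsto_one_div_add_atTop_nhds_zero_nat
  let b : C(OnePoint X, ℝ) := continuousMapMkDiscrete _ 0 (hx.tendsto_extend_zero_cofinite hu)
  have hb : b ∉ Oalpha X := fun hb => Set.infinite_range_of_injective hx <|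
    (finite_setOf_ne_zero_of_mem_Oalpha hb).subset <| Set.range_subset_iff.2 fun n => by
      simp [b, continuousMapMkDiscrete, continuousMapMk, hx.extend_apply, u]; positivity
  obtain ⟨c, hcS, hcb⟩ := hX (Set.range fun n => pointIndicator (x n)) (Set.countable_range _)
    (Set.range_subset_iff.2 fun n => pointIndicator_mem_Oalpha (x n)) b hb
  refine hcb <| ContinuousMap.mul_eq_zero_of_forall fun z => ?_
  induction z using OnePoint.rec with
  | infty => exact .inr rfl
  | coe y =>
    by_cases hy : ∃ n, x n = y
    · obtain ⟨n, rfl⟩ := hy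
      exact .inl (apply_eq_zero_of_mul_pointIndicator_eq_zero (hcS _ ⟨n, rfl⟩))
    · exact .inr (show extend x u 0 y = 0 from extend_apply' _ _ _ hy)
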